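/- Hörmander-condition tail estimate: Let K : ℝⁿ×ℝⁿ → ℂ satisfy ∫_{|x-y|≥2|y-y'|} |K(x,y)-K(x,y')| dx ≤ A' for all y,y' ∈ ℝⁿ. Let b ∈ L¹(ℝⁿ) be supported in a cube Q with center y_Q, ∫_Q b = 0, and ‖b‖_{L¹} ≤ M. Let Q* be the cube with the same center and side length 2√n·ℓ(Q). Then ∫_{ℝⁿ∖Q*} |∫_Q K(x,y) b(y) dy| dx ≤ A'·M. -/

import Mathlib

/-! Since `∫ b = 0`, the inner integral equals `∫_Q (K(x,y) - K(x,y_Q)) b(y) dy`. After Tonelli it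
remains to bound `∫_{ℝⁿ∖Q*} |K(x,y) - K(x,y_Q)| dx` for each `y ∈ Q`; as `|y - y_Q| ≤ √n ℓ/2` while
`|x - y_Q| > √n ℓ` off `Q*`, this integral runs over part of the region of the Hörmander
condition, so it is at most `A'`. -/

open MeasureTheory Filter Set Topology ENNReal

noncomputable section
namespace Paper

def cube {n : ℕ} (c : EuclideanSpace ℝ (Fin n)) (ℓ : ℝ) : Set (EuclideanSpace ℝ (Fin n)) :=
  {x | ∀ i, |x i - c i| ≤ ℓ / 2}

lemma measurableSet_cube {n : ℕ} (c : EuclideanSpace ℝ (Fin n)) (ℓ : ℝ) :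
    MeasurableSet (cube c ℓ) := by
  have hcube : cube c ℓ = ⋂ i, {x : EuclideanSpace ℝ (Fin n) | |x i - c i| ≤ ℓ / 2} := by
    ext x; simp [cube]
  rw [hcube]
  exact MeasurableSet.iInter fun i => measurableSet_le
    (((EuclideanSpace.proj (𝕜 := ℝ) i).continuous.measurable.sub_const _).abs) measurable_const

lemma norm_sub_le_of_mem_cube {n : ℕ} {c y : EuclideanSpace ℝ (Fin n)} {ℓ : ℝ} (hℓ : 0 ≤ ℓ)
    (hy : y ∈ cube c ℓ) : ‖y - c‖ ≤ Real.sqrt n * (ℓ / 2) := by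
  have hsum : ∑ i, ‖(y - c) i‖ ^ 2 ≤ n * (ℓ / 2) ^ 2 := by
    calc ∑ i, ‖(y - c) i‖ ^ 2 ≤ ∑ _i : Fin n, (ℓ / 2) ^ 2 :=
          Finset.sum_le_sum fun i _ => pow_le_pow_left₀ (norm_nonneg _) (by simpa using hy i) 2
      _ = n * (ℓ / 2) ^ 2 := by simp
  calc ‖y - c‖ = Real.sqrt (∑ i, ‖(y - c) i‖ ^ 2) := EuclideanSpace.norm_eq _
    _ ≤ Real.sqrt (n * (ℓ / 2) ^ 2) := Real.sqrt_le_sqrt hsum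
    _ = Real.sqrt n * (ℓ / 2) := by
      rw [Real.sqrt_mul (Nat.cast_nonneg n), Real.sqrt_sq (by positivity)]

lemma two_mul_norm_sub_le_of_mem_cube_of_notMem_cube {n : ℕ} {c x y : EuclideanSpace ℝ (Fin n)}
    {ℓ : ℝ} (hy : y ∈ cube c ℓ) (hx : x ∉ cube c (2 * Real.sqrt n * ℓ)) :
    2 * ‖y - c‖ ≤ ‖x - c‖ := by
  have hhalf : 2 * Real.sqrt n * ℓ / 2 = Real.sqrt n * ℓ := by ring
  obtain ⟨i, hi⟩ : ∃ i, Real.sqrt n * ℓ < |x i - c i| := by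
    simpa only [cube, mem_ofPred_eq, hhalf, not_forall, not_le] using hx
  have hℓ : 0 ≤ ℓ := by linarith [abs_nonneg (y i - c i), hy i]
  have hxi : |x i - c i| ≤ ‖x - c‖ := by simpa using PiLp.norm_apply_le (x - c) i
  linarith [norm_sub_le_of_mem_cube hℓ hy]

lemma enorm_setIntegral_mul_le_of_setIntegral_eq_zero {α : Type*} [MeasurableSpace α]
    {μ : Measure α} {s : Set α} {f k : α → ℂ} (hf : IntegrableOn f s μ)
    (hmean : ∫ y in s, f y ∂μ = 0) (a : ℂ) :
    ‖∫ y in s, k y * f y ∂μ‖ₑ ≤ ∫⁻ y in s, ‖k y - a‖ₑ * ‖f y‖ₑ ∂μ := by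
  by_cases hkf : IntegrableOn (fun y => k y * f y) s μ
  · have hshift : ∫ y in s, k y * f y ∂μ = ∫ y in s, (k y - a) * f y ∂μ := by
      simp_rw [sub_mul]
      rw [integral_sub hkf (hf.const_mul a), integral_const_mul, hmean, mul_zero, sub_zero]
    rw [hshift]
    simpa only [enorm_mul] using enorm_integral_le_lintegral_enorm fun y => (k y - a) * f y
  · simp [integral_undef hkf]

theorem stmt15_general (n : ℕ)
    (K : EuclideanSpace ℝ (Fin n) → EuclideanSpace ℝ (Fin n) → ℂ)
    (hKmeas : Measurable (Function.uncurry K))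
    (A' M : ℝ) (hA' : 0 ≤ A')
    (hK : ∀ y y', ∫⁻ x in {x | 2 * ‖y - y'‖ ≤ ‖x - y‖},
      (‖K x y - K x y'‖₊ : ℝ≥0∞) ∂volume ≤ ENNReal.ofReal A')
    (c : EuclideanSpace ℝ (Fin n)) (ℓ : ℝ)
    (b : EuclideanSpace ℝ (Fin n) → ℂ) (hb : Integrable b volume)
    (hsupp : Function.support b ⊆ cube c ℓ)
    (hmean : ∫ y, b y ∂volume = 0)
    (hbM : ∫⁻ y, (‖b y‖₊ : ℝ≥0∞) ∂volume ≤ ENNReal.ofReal M) :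
    ∫⁻ x in (cube c (2 * Real.sqrt n * ℓ))ᶜ,
        (‖∫ y in cube c ℓ, K x y * b y ∂volume‖₊ : ℝ≥0∞) ∂volume
      ≤ ENNReal.ofReal (A' * M) := by
  simp_rw [← enorm_eq_nnnorm] at hK hbM ⊢
  set Q := cube c ℓ
  set Qs := cube c (2 * Real.sqrt n * ℓ)
  have hmeanQ : ∫ y in Q, b y = 0 := by
    rwa [setIntegral_eq_integral_of_forall_compl_eq_zero fun y hy =>
      Function.notMem_support.mp fun h => hy (hsupp h)]
  have hKsub : Measurable fun p : EuclideanSpace ℝ (Fin n) × EuclideanSpace ℝ (Fin n) =>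
      ‖K p.1 p.2 - K p.1 c‖ₑ :=
    (hKmeas.sub (hKmeas.comp (measurable_fst.prodMk measurable_const))).enorm
  have htail : ∀ y ∈ Q, ∫⁻ x in Qsᶜ, ‖K x y - K x c‖ₑ ≤ ENNReal.ofReal A' := fun y hy =>
    calc ∫⁻ x in Qsᶜ, ‖K x y - K x c‖ₑ = ∫⁻ x in Qsᶜ, ‖K x c - K x y‖ₑ := by
          simp_rw [enorm_sub_rev]
      _ ≤ ∫⁻ x in {x | 2 * ‖c - y‖ ≤ ‖x - c‖}, ‖K x c - K x y‖ₑ :=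
          lintegral_mono_set fun x hx => by
            simpa [norm_sub_rev c y] using two_mul_norm_sub_le_of_mem_cube_of_notMem_cube hy hx
      _ ≤ ENNReal.ofReal A' := hK c y
  calc ∫⁻ x in Qsᶜ, ‖∫ y in Q, K x y * b y‖ₑ
      ≤ ∫⁻ x in Qsᶜ, ∫⁻ y in Q, ‖K x y - K x c‖ₑ * ‖b y‖ₑ := lintegral_mono fun x =>
        enorm_setIntegral_mul_le_of_setIntegral_eq_zero hb.integrableOn hmeanQ _
    _ = ∫⁻ y in Q, ∫⁻ x in Qsᶜ, ‖K x y - K x c‖ₑ * ‖b y‖ₑ := lintegral_lintegral_swap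
        (hKsub.aemeasurable.mul hb.aestronglyMeasurable.enorm.restrict.comp_snd)
    _ ≤ ∫⁻ y in Q, ENNReal.ofReal A' * ‖b y‖ₑ := by
        refine setLIntegral_mono' (measurableSet_cube c ℓ) fun y hy => ?_
        rw [lintegral_mul_const' _ _ enorm_ne_top]
        exact mul_le_mul_left (htail y hy) _
    _ ≤ ENNReal.ofReal A' * ENNReal.ofReal M := by
        rw [lintegral_const_mul' _ _ ofReal_ne_top]
        exact mul_le_mul_right (setLIntegral_le_lintegral _ _ |>.trans hbM) _
    _ = ENNReal.ofReal (A' * M) := (ofReal_mul hA').symm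

/-- Hörmander-condition tail estimate: if `K` satisfies the Hörmander condition with
constant `A'`, `b` is supported in a cube `Q` (center `y_Q`, side `ℓ`), has vanishing
integral and `‖b‖₁ ≤ M`, then `∫_{ℝⁿ∖Q*} |∫_Q K(x,y) b(y) dy| dx ≤ A' M`, where `Q*` has
the same center and side `2√n ℓ`. -/
theorem stmt15 (n : ℕ) (hn : 0 < n)
    (K : EuclideanSpace ℝ (Fin n) → EuclideanSpace ℝ (Fin n) → ℂ)
    (hKmeas : Measurable (Function.uncurry K))
    (A' M : ℝ) (hA' : 0 ≤ A') (hM : 0 ≤ M)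
    (hK : ∀ y y', ∫⁻ x in {x | 2 * ‖y - y'‖ ≤ ‖x - y‖},
      (‖K x y - K x y'‖₊ : ℝ≥0∞) ∂volume ≤ ENNReal.ofReal A')
    (c : EuclideanSpace ℝ (Fin n)) (ℓ : ℝ) (hℓ : 0 < ℓ)
    (b : EuclideanSpace ℝ (Fin n) → ℂ) (hb : Integrable b volume)
    (hsupp : Function.support b ⊆ cube c ℓ)
    (hmean : ∫ y, b y ∂volume = 0)
    (hbM : ∫⁻ y, (‖b y‖₊ : ℝ≥0∞) ∂volume ≤ ENNReal.ofReal M) :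
    ∫⁻ x in (cube c (2 * Real.sqrt n * ℓ))ᶜ,
        (‖∫ y in cube c ℓ, K x y * b y ∂volume‖₊ : ℝ≥0∞) ∂volume
      ≤ ENNReal.ofReal (A' * M) :=
  stmt15_general n K hKmeas A' M hA' hK c ℓ b hb hsupp hmean hbM

end Paper
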